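/- arXiv:2503.16035 — 7 statements merged into one kernel-verified Lean document; each statement's English description precedes it below -/
import Mathlib

section
/- Let (X, d) be a compact metric space and T : X → X a surjective map that is non-expanding (d(T x, T y) ≤ d(x, y) for all x, y). Then T is a bijective isometry: for all x, y ∈ X, d(T x, T y) = d(x, y). -/
/-- In a compact metric space, any sequence comes ε-close to itself at two
distinct indices. -/
lemma recur_aux {Y : Type*} [MetricSpace Y] [CompactSpace Y] (c : ℕ → Y) :
    ∀ ε > (0 : ℝ), ∃ n m, n < m ∧ dist (c n) (c m) < ε := by
  intro ε hε
  obtain ⟨L, -, φ, hφ, hlim⟩ :=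
    IsCompact.tendsto_subseq (isCompact_univ (X := Y)) (fun n => Set.mem_univ (c n))
  rw [Metric.tendsto_atTop] at hlim
  obtain ⟨N, hN⟩ := hlim (ε / 2) (by linarith)
  refine ⟨φ N, φ (N + 1), hφ (Nat.lt_succ_self N), ?_⟩
  calc dist (c (φ N)) (c (φ (N + 1)))
      ≤ dist (c (φ N)) L + dist (c (φ (N + 1))) L := dist_triangle_right _ _ _
    _ < ε / 2 + ε / 2 := add_lt_add (hN N le_rfl) (hN (N + 1) (Nat.le_succ N))
    _ = ε := by ring

theorem stmt_0 {X : Type*} [MetricSpace X] [CompactSpace X]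
    (T : X → X) (hsurj : Function.Surjective T)
    (hne : ∀ x y : X, dist (T x) (T y) ≤ dist x y) :
    Function.Bijective T ∧ ∀ x y : X, dist (T x) (T y) = dist x y := by
  have hne_iter : ∀ (n : ℕ) (u v : X), dist (T^[n] u) (T^[n] v) ≤ dist u v := by
    intro n
    induction n with
    | zero => simp
    | succ n ih =>
      intro u v
      rw [Function.iterate_succ_apply, Function.iterate_succ_apply]
      exact le_trans (ih _ _) (hne u v)
  have key : ∀ x y : X, dist x y ≤ dist (T x) (T y) := by
    intro x y
    have h2 : ∀ ε > (0 : ℝ), dist x y ≤ dist (T x) (T y) + ε := by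
      intro ε hε
      set g : X → X := Function.surjInv hsurj with hgdef
      have hg : ∀ z, T (g z) = z := fun z => Function.surjInv_eq hsurj z
      -- backward orbits with a 1 = x, b 1 = y
      set a : ℕ → X := fun n => Nat.rec (T x) (fun n _ => g^[n] x) n with hadef
      set b : ℕ → X := fun n => Nat.rec (T y) (fun n _ => g^[n] y) n with hbdef
      have ha0 : a 0 = T x := rfl
      have hb0 : b 0 = T y := rfl
      have ha1 : a 1 = x := rfl
      have hb1 : b 1 = y := rfl
      have hTa : ∀ n, T (a (n + 1)) = a n := by
        intro n
        cases n with
        | zero => simp [hadef]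
        | succ n =>
          show T (g^[n + 1] x) = g^[n] x
          rw [Function.iterate_succ_apply', hg]
      have hTb : ∀ n, T (b (n + 1)) = b n := by
        intro n
        cases n with
        | zero => simp [hbdef]
        | succ n =>
          show T (g^[n + 1] y) = g^[n] y
          rw [Function.iterate_succ_apply', hg]
      have hTaIter : ∀ n k, T^[n] (a (n + k)) = a k := by
        intro n
        induction n with
        | zero => intro k; simp
        | succ n ih =>
          intro k
          have : n + 1 + k = (n + k) + 1 := by ring
          rw [this, Function.iterate_succ_apply, hTa (n + k), ih k]
      have hTbIter : ∀ n k, T^[n] (b (n + k)) = b k := by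
        intro n
        induction n with
        | zero => intro k; simp
        | succ n ih =>
          intro k
          have : n + 1 + k = (n + k) + 1 := by ring
          rw [this, Function.iterate_succ_apply, hTb (n + k), ih k]
      -- recurrence in the product space
      obtain ⟨n, m, hnm, hd⟩ := recur_aux (fun n => ((a n, b n) : X × X)) (ε / 2)
        (by linarith)
      rw [Prod.dist_eq] at hd
      simp only [max_lt_iff] at hd
      obtain ⟨hda, hdb⟩ := hd
      set k := m - n with hkdef
      have hm : m = n + k := by omega
      have hk1 : 1 ≤ k := by omega
      have hak : dist (a 0) (a k) < ε / 2 := by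
        calc dist (a 0) (a k)
            = dist (T^[n] (a (n + 0))) (T^[n] (a (n + k))) := by
              rw [hTaIter n 0, hTaIter n k]
          _ ≤ dist (a (n + 0)) (a (n + k)) := hne_iter n _ _
          _ < ε / 2 := by rw [Nat.add_zero, ← hm]; exact hda
      have hbk : dist (b 0) (b k) < ε / 2 := by
        calc dist (b 0) (b k)
            = dist (T^[n] (b (n + 0))) (T^[n] (b (n + k))) := by
              rw [hTbIter n 0, hTbIter n k]
          _ ≤ dist (b (n + 0)) (b (n + k)) := hne_iter n _ _
          _ < ε / 2 := by rw [Nat.add_zero, ← hm]; exact hdb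
      have hxy : dist x y ≤ dist (a k) (b k) := by
        have h1 : T^[k - 1] (a k) = x := by
          have := hTaIter (k - 1) 1
          rwa [Nat.sub_add_cancel hk1, ha1] at this
        have h2 : T^[k - 1] (b k) = y := by
          have := hTbIter (k - 1) 1
          rwa [Nat.sub_add_cancel hk1, hb1] at this
        calc dist x y = dist (T^[k - 1] (a k)) (T^[k - 1] (b k)) := by rw [h1, h2]
          _ ≤ dist (a k) (b k) := hne_iter _ _ _
      calc dist x y ≤ dist (a k) (b k) := hxy
        _ ≤ dist (a k) (a 0) + dist (a 0) (b 0) + dist (b 0) (b k) :=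
            dist_triangle4 _ _ _ _
        _ = dist (a 0) (a k) + dist (T x) (T y) + dist (b 0) (b k) := by
            rw [dist_comm (a k) (a 0), ha0, hb0]
        _ ≤ ε / 2 + dist (T x) (T y) + ε / 2 := by
            exact add_le_add (add_le_add hak.le le_rfl) hbk.le
        _ = dist (T x) (T y) + ε := by ring
    exact le_of_forall_pos_le_add h2
  constructor
  · refine ⟨fun u v huv => ?_, hsurj⟩
    have := key u v
    rw [huv, dist_self] at this
    exact dist_le_zero.mp this
  · exact fun x y => le_antisymm (hne x y) (key x y)
end

section
/- Let (X, d) be a metric space and T : X → X non-expanding. If a point u ∈ X is non-wandering for T (for every ε > 0 there are infinitely many positive integers k such that the ε-ball around u meets its image under T^k), then u is recurrent: there exists a strictly increasing sequence of positive integers (kₙ) with d(T^{kₙ} u, u) → 0. -/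
/-!
Since `T^[k]` is non-expanding, if `v` is `ε`-close to `u` and `T^[k] v` is `ε`-close to `u`,
then `T^[k] u` is `2ε`-close to `u`. Hence the orbit of
a non-wandering point returns arbitrarily close to it infinitely often, i.e. `u` is a cluster
point of its own orbit, and in a metric space a cluster point of a sequence is the limit of a
subsequence.
-/

open Filter Topology Metric

section

variable {X : Type*} [PseudoMetricSpace X]

theorem LipschitzWith.dist_apply_self_le {K : NNReal} {f : X → X} (hf : LipschitzWith K f)
    (u v : X) : dist (f u) u ≤ K * dist u v + dist (f v) u :=
  calc dist (f u) u ≤ dist (f u) (f v) + dist (f v) u := dist_triangle _ _ _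
    _ ≤ K * dist u v + dist (f v) u := by gcongr; exact hf.dist_le_mul u v

def IsNonWandering (T : X → X) (u : X) : Prop :=
  ∀ ε > (0 : ℝ), ∃ᶠ k in atTop, ∃ v, dist v u < ε ∧ dist (T^[k] v) u < ε

theorem IsNonWandering.mapClusterPt_iterate {T : X → X} {u : X} (hu : IsNonWandering T u)
    (hT : LipschitzWith 1 T) : MapClusterPt u atTop (fun k => T^[k] u) := by
  rw [nhds_basis_ball.mapClusterPt_iff_frequently]
  intro ε hε
  refine (hu (ε / 2) (half_pos hε)).mono fun k ⟨v, hv, hkv⟩ => ?_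
  calc dist (T^[k] u) u ≤ 1 ^ k * dist u v + dist (T^[k] v) u :=
        (hT.iterate k).dist_apply_self_le u v
    _ < ε / 2 + ε / 2 := by rw [one_pow, one_mul, dist_comm]; gcongr
    _ = ε := add_halves ε

theorem MapClusterPt.exists_pos_strictMono_tendsto {x : X} {u : ℕ → X}
    (hx : MapClusterPt x atTop u) :
    ∃ φ : ℕ → ℕ, StrictMono φ ∧ (∀ n, 1 ≤ φ n) ∧ Tendsto (u ∘ φ) atTop (𝓝 x) := by
  obtain ⟨ψ, hψ, hlim⟩ := hx.tendsto_subseq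
  refine ⟨ψ ∘ Nat.succ, hψ.comp fun _ _ => Nat.succ_lt_succ, fun n => ?_, ?_⟩
  · exact (Nat.zero_le _).trans_lt (hψ n.lt_succ_self)
  · exact hlim.comp (tendsto_add_atTop_nat 1)

end

theorem stmt_1 {X : Type*} [MetricSpace X] (T : X → X)
    (hne : ∀ x y : X, dist (T x) (T y) ≤ dist x y) (u : X)
    (hnw : ∀ ε > (0 : ℝ), ∀ N : ℕ, ∃ k : ℕ, N ≤ k ∧ 1 ≤ k ∧
      ∃ v : X, dist v u < ε ∧ dist (T^[k] v) u < ε) :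
    ∃ k : ℕ → ℕ, StrictMono k ∧ (∀ n, 1 ≤ k n) ∧
      Filter.Tendsto (fun n => dist (T^[k n] u) u) Filter.atTop (nhds 0) := by
  have hu : IsNonWandering T u := fun ε hε =>
    frequently_atTop.2 fun N => (hnw ε hε N).imp fun _ ⟨hN, _, hv⟩ => ⟨hN, hv⟩
  obtain ⟨k, hk, hk_pos, hlim⟩ :=
    (hu.mapClusterPt_iterate (LipschitzWith.mk_one hne)).exists_pos_strictMono_tendsto
  exact ⟨k, hk, hk_pos, tendsto_iff_dist_tendsto_zero.1 hlim⟩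
end

section
/- Let (X, d) be a metric space, T : X → X non-expanding, and u ∈ X such that the ω-limit set ω(u) (the set of limit points of the sequence (T^n u)) is nonempty and compact. Then for every v ∈ ω(u), the closure of the forward orbit {T^n v : n ∈ ℕ} equals ω(u); in particular ω(v) = ω(u). -/
/-!
Since `T` is non-expanding, the orbit of `v ∈ ω(u)` shadows the orbit of `u`: if `T^a u` is close
to `v`, then `T^(b - a) v` is just as close to `T^b u` for every `b ≥ a`. Hence every point of
`ω(u)` is a limit point of the orbit of `v`, i.e. `ω(u) ⊆ ω(v)`. Conversely, `ω(u)` is closed and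
`T`-invariant, so it contains the closure of the orbit of `v`, which in turn contains `ω(v)`.
-/

/-- The ω-limit set of `u` under iteration of `T`. -/
def omegaSet {X : Type*} [MetricSpace X] (T : X → X) (u : X) : Set X :=
  {v | ∃ k : ℕ → ℕ, StrictMono k ∧
    Filter.Tendsto (fun n => T^[k n] u) Filter.atTop (nhds v)}

open Filter Topology Set

section OmegaSet

variable {X : Type*} [MetricSpace X] {T : X → X} {u v : X}

theorem mem_omegaSet_iff_mapClusterPt :
    v ∈ omegaSet T u ↔ MapClusterPt v atTop (fun n => T^[n] u) := by
  constructor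
  · rintro ⟨k, hk, hkv⟩
    exact MapClusterPt.of_comp hk.tendsto_atTop hkv.mapClusterPt
  · exact MapClusterPt.tendsto_subseq

theorem isClosed_omegaSet (T : X → X) (u : X) : IsClosed (omegaSet T u) := by
  have : omegaSet T u = {v | MapClusterPt v atTop fun n => T^[n] u} :=
    ext fun _ => mem_omegaSet_iff_mapClusterPt
  exact this ▸ isClosed_setOfPred_clusterPt

theorem omegaSet_subset_closure_range_iterate (T : X → X) (u : X) :
    omegaSet T u ⊆ closure (range fun n => T^[n] u) := by
  intro v hv
  have := mapClusterPt_atTop_iff_forall_mem_closure.1 (mem_omegaSet_iff_mapClusterPt.1 hv) 0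
  exact closure_mono (image_subset_range _ _) this

theorem iterate_mem_omegaSet (hT : Continuous T) (hv : v ∈ omegaSet T u) (j : ℕ) :
    T^[j] v ∈ omegaSet T u := by
  rw [mem_omegaSet_iff_mapClusterPt] at hv ⊢
  have hshift : T^[j] ∘ (fun n => T^[n] u) = (fun n => T^[n] u) ∘ (· + j) := by
    funext n
    rw [Function.comp_apply, Function.comp_apply, Nat.add_comm n j, Function.iterate_add_apply]
  have := (hv.continuousAt_comp (hT.iterate j).continuousAt)
  rw [hshift] at this
  exact this.of_comp (tendsto_add_atTop_nat j)

theorem closure_range_iterate_subset_omegaSet (hT : Continuous T) (hv : v ∈ omegaSet T u) :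
    closure (range fun n => T^[n] v) ⊆ omegaSet T u :=
  (isClosed_omegaSet T u).closure_subset_iff.2 <| range_subset_iff.2 (iterate_mem_omegaSet hT hv)

theorem LipschitzWith.omegaSet_subset_omegaSet (hT : LipschitzWith 1 T) (hv : v ∈ omegaSet T u) :
    omegaSet T u ⊆ omegaSet T v := by
  intro w hw
  rw [mem_omegaSet_iff_mapClusterPt, Metric.nhds_basis_ball.mapClusterPt_iff_frequently]
    at hv hw ⊢
  intro ε hε
  refine frequently_atTop.2 fun N => ?_
  obtain ⟨a, -, ha⟩ := frequently_atTop.1 (hv (ε / 2) (half_pos hε)) 0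
  obtain ⟨b, hb, hbw⟩ := frequently_atTop.1 (hw (ε / 2) (half_pos hε)) (a + N)
  refine ⟨b - a, by omega, ?_⟩
  have hshadow : dist (T^[b - a] v) (T^[b] u) ≤ dist v (T^[a] u) := by
    have hb' : T^[b] u = T^[b - a] (T^[a] u) := by
      rw [← Function.iterate_add_apply, Nat.sub_add_cancel (by omega)]
    simpa [hb'] using (hT.iterate (b - a)).dist_le_mul v (T^[a] u)
  rw [Metric.mem_ball, dist_comm] at ha
  rw [Metric.mem_ball] at hbw ⊢
  calc dist (T^[b - a] v) w ≤ dist (T^[b - a] v) (T^[b] u) + dist (T^[b] u) w :=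
        dist_triangle _ _ _
    _ < ε / 2 + ε / 2 := add_lt_add (hshadow.trans_lt ha) hbw
    _ = ε := add_halves ε

end OmegaSet

theorem stmt_2_general {X : Type*} [MetricSpace X] (T : X → X)
    (hne : ∀ x y : X, dist (T x) (T y) ≤ dist x y) (u : X) :
    ∀ v ∈ omegaSet T u,
      closure {y | ∃ n : ℕ, y = T^[n] v} = omegaSet T u ∧
      omegaSet T v = omegaSet T u := by
  intro v hv
  have hT : LipschitzWith 1 T := .mk_one hne
  have horbit : {y | ∃ n : ℕ, y = T^[n] v} = range fun n => T^[n] v := by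
    ext y; exact exists_congr fun n => eq_comm
  have hsub := closure_range_iterate_subset_omegaSet hT.continuous hv
  have hsup := hT.omegaSet_subset_omegaSet hv
  have hcl := omegaSet_subset_closure_range_iterate T v
  rw [horbit]
  exact ⟨hsub.antisymm (hsup.trans hcl), (hcl.trans hsub).antisymm hsup⟩

theorem stmt_2 {X : Type*} [MetricSpace X] (T : X → X)
    (hne : ∀ x y : X, dist (T x) (T y) ≤ dist x y) (u : X)
    (hnonempty : (omegaSet T u).Nonempty) (hcomp : IsCompact (omegaSet T u)) :
    ∀ v ∈ omegaSet T u,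
      closure {y | ∃ n : ℕ, y = T^[n] v} = omegaSet T u ∧
      omegaSet T v = omegaSet T u :=
  stmt_2_general T hne u
end

section
/- Let (X, d) be a metric space and T : X → X a continuous non-expanding map. Suppose u, v ∈ X are both recurrent, i.e., each lies in its own ω-limit set, and suppose their ω-limit sets are compact. Then d(T u, T v) = d(u, v). -/
private lemma iter_ne {K : Type*} [MetricSpace K] (f : K → K)
    (hne : ∀ x y, dist (f x) (f y) ≤ dist x y) :
    ∀ n (a b : K), dist (f^[n] a) (f^[n] b) ≤ dist a b := by
  intro n
  induction n with
  | zero => simp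
  | succ n ih =>
    intro a b
    simp only [Function.iterate_succ_apply]
    exact (ih (f a) (f b)).trans (hne a b)

/-- A nonexpansive surjection of a compact metric space does not decrease distances. -/
private lemma key {K : Type*} [MetricSpace K] [CompactSpace K] (f : K → K)
    (hne : ∀ x y, dist (f x) (f y) ≤ dist x y) (hsurj : Function.Surjective f)
    (x y : K) : dist x y ≤ dist (f x) (f y) := by
  apply le_of_forall_pos_le_add
  intro ε hε
  -- preimages under iterates
  have hsn : ∀ n : ℕ, Function.Surjective (f^[n]) := fun n => Function.Surjective.iterate hsurj n
  choose xs hxs using fun n => hsn n x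
  choose ys hys using fun n => hsn n y
  -- sequential compactness of K × K
  obtain ⟨a, -, φ, hφ, hconv⟩ :=
    (isCompact_univ : IsCompact (Set.univ : Set (K × K))).tendsto_subseq
      (x := fun n => (xs n, ys n)) (fun n => Set.mem_univ _)
  rw [Metric.tendsto_atTop] at hconv
  obtain ⟨N, hN⟩ := hconv (ε / 4) (by positivity)
  set m := φ N with hm
  set n := φ (N + 1) with hn
  have hmn : m < n := hφ (Nat.lt_succ_self N)
  have hdx : dist (xs n) (xs m) < ε / 2 := by
    have h1 := hN N le_rfl
    have h2 := hN (N + 1) (Nat.le_succ N)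
    have e1 : dist (xs m) a.1 ≤ dist ((xs m, ys m)) a := by
      rw [Prod.dist_eq]; exact le_max_left _ _
    have e2 : dist (xs n) a.1 ≤ dist ((xs n, ys n)) a := by
      rw [Prod.dist_eq]; exact le_max_left _ _
    calc dist (xs n) (xs m) ≤ dist (xs n) a.1 + dist (xs m) a.1 := dist_triangle_right _ _ _
      _ < ε / 4 + ε / 4 := add_lt_add (lt_of_le_of_lt e2 h2) (lt_of_le_of_lt e1 h1)
      _ = ε / 2 := by ring
  have hdy : dist (ys n) (ys m) < ε / 2 := by
    have h1 := hN N le_rfl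
    have h2 := hN (N + 1) (Nat.le_succ N)
    have e1 : dist (ys m) a.2 ≤ dist ((xs m, ys m)) a := by
      rw [Prod.dist_eq]; exact le_max_right _ _
    have e2 : dist (ys n) a.2 ≤ dist ((xs n, ys n)) a := by
      rw [Prod.dist_eq]; exact le_max_right _ _
    calc dist (ys n) (ys m) ≤ dist (ys n) a.2 + dist (ys m) a.2 := dist_triangle_right _ _ _
      _ < ε / 4 + ε / 4 := add_lt_add (lt_of_le_of_lt e2 h2) (lt_of_le_of_lt e1 h1)
      _ = ε / 2 := by ring
  set p := f^[m] (xs n) with hp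
  set q := f^[m] (ys n) with hq
  have hpx : dist p x < ε / 2 := by
    calc dist p x = dist (f^[m] (xs n)) (f^[m] (xs m)) := by rw [hxs m]
      _ ≤ dist (xs n) (xs m) := iter_ne f hne m _ _
      _ < ε / 2 := hdx
  have hqy : dist q y < ε / 2 := by
    calc dist q y = dist (f^[m] (ys n)) (f^[m] (ys m)) := by rw [hys m]
      _ ≤ dist (ys n) (ys m) := iter_ne f hne m _ _
      _ < ε / 2 := hdy
  set r := n - m with hr
  have hr1 : 1 ≤ r := Nat.le_sub_of_add_le (by omega)
  have hfp : f^[r] p = x := by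
    rw [hp, ← Function.iterate_add_apply]
    have : r + m = n := by omega
    rw [this, hxs]
  have hfq : f^[r] q = y := by
    rw [hq, ← Function.iterate_add_apply]
    have : r + m = n := by omega
    rw [this, hys]
  have step : dist x y ≤ dist (f p) (f q) := by
    have : f^[r] p = f^[r-1] (f p) := by
      conv_lhs => rw [show r = (r - 1) + 1 by omega]
      rw [Function.iterate_succ_apply]
    have h2 : f^[r] q = f^[r-1] (f q) := by
      conv_lhs => rw [show r = (r - 1) + 1 by omega]
      rw [Function.iterate_succ_apply]
    rw [← hfp, ← hfq, this, h2]
    exact iter_ne f hne (r - 1) _ _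
  calc dist x y ≤ dist (f p) (f q) := step
    _ ≤ dist (f p) (f x) + dist (f x) (f y) + dist (f y) (f q) := dist_triangle4 _ _ _ _
    _ ≤ dist p x + dist (f x) (f y) + dist q y := by
        gcongr
        · exact hne p x
        · rw [dist_comm]; exact (hne q y).trans_eq (dist_comm q y ▸ rfl)
    _ ≤ dist (f x) (f y) + ε := by
        have := hpx.le; have := hqy.le; linarith

private lemma omega_inv {X : Type*} [MetricSpace X] {T : X → X} (hcont : Continuous T)
    {u w : X} (hw : w ∈ omegaSet T u) : T w ∈ omegaSet T u := by
  obtain ⟨k, hk, hkt⟩ := hw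
  refine ⟨fun n => k n + 1, fun a b hab => by simpa using hk hab, ?_⟩
  have : Filter.Tendsto (fun n => T (T^[k n] u)) Filter.atTop (nhds (T w)) :=
    (hcont.tendsto w).comp hkt
  simpa [Function.iterate_succ_apply'] using this

private lemma omega_orbit {X : Type*} [MetricSpace X] {T : X → X} (hcont : Continuous T)
    {u : X} (hu : u ∈ omegaSet T u) : ∀ m : ℕ, T^[m] u ∈ omegaSet T u := by
  intro m
  induction m with
  | zero => simpa using hu
  | succ m ih => rw [Function.iterate_succ_apply']; exact omega_inv hcont ih

private lemma omega_surj {X : Type*} [MetricSpace X] {T : X → X} (hcont : Continuous T)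
    {u : X} (hu : u ∈ omegaSet T u) (hcu : IsCompact (omegaSet T u)) :
    ∀ y ∈ omegaSet T u, ∃ z ∈ omegaSet T u, T z = y := by
  intro y hy
  obtain ⟨k, hk, hkt⟩ := hy
  -- the predecessor orbit sequence, inside the compact ω-set
  set c : ℕ → X := fun j => T^[k (j + 1) - 1] u with hc
  have hcmem : ∀ j, c j ∈ omegaSet T u := fun j => omega_orbit hcont hu _
  obtain ⟨z, hz, φ, hφ, hconv⟩ := hcu.tendsto_subseq hcmem
  refine ⟨z, hz, ?_⟩
  have h1 : Filter.Tendsto (fun j => T (c (φ j))) Filter.atTop (nhds (T z)) :=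
    (hcont.tendsto z).comp hconv
  have hge : ∀ j, 1 ≤ k (φ j + 1) := fun j => le_trans (Nat.one_le_iff_ne_zero.mpr (by omega))
    (le_trans (Nat.succ_le_succ (Nat.zero_le _)) (hk.le_apply))
  have heq : ∀ j, T (c (φ j)) = T^[k (φ j + 1)] u := by
    intro j
    rw [hc]
    simp only
    have h := (Function.iterate_succ_apply' T (k (φ j + 1) - 1) u).symm
    rw [h]
    congr 1
    have := hge j
    omega
  have h2 : Filter.Tendsto (fun j => T^[k (φ j + 1)] u) Filter.atTop (nhds y) := by
    have hmono : Filter.Tendsto (fun j => φ j + 1) Filter.atTop Filter.atTop :=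
      (StrictMono.tendsto_atTop (fun a b hab => by simpa using hφ hab))
    exact hkt.comp hmono
  have h1' : Filter.Tendsto (fun j => T^[k (φ j + 1)] u) Filter.atTop (nhds (T z)) := by
    rw [show (fun j => T^[k (φ j + 1)] u) = fun j => T (c (φ j)) from funext fun j => (heq j).symm]
    exact h1
  exact tendsto_nhds_unique h1' h2

theorem stmt_3 {X : Type*} [MetricSpace X] (T : X → X) (hcont : Continuous T)
    (hne : ∀ x y : X, dist (T x) (T y) ≤ dist x y) (u v : X)
    (hu : u ∈ omegaSet T u) (hv : v ∈ omegaSet T v)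
    (hcu : IsCompact (omegaSet T u)) (hcv : IsCompact (omegaSet T v)) :
    dist (T u) (T v) = dist u v := by
  set s : Set X := omegaSet T u ∪ omegaSet T v with hs
  have hsc : IsCompact s := hcu.union hcv
  have hmaps : ∀ x ∈ s, T x ∈ s := by
    rintro x (hx | hx)
    · exact Or.inl (omega_inv hcont hx)
    · exact Or.inr (omega_inv hcont hx)
  haveI : CompactSpace s := isCompact_iff_compactSpace.mp hsc
  set f : s → s := fun x => ⟨T x.1, hmaps x.1 x.2⟩ with hf
  have hne' : ∀ x y : s, dist (f x) (f y) ≤ dist x y := by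
    intro x y
    simp only [hf, Subtype.dist_eq]
    exact hne x.1 y.1
  have hsurj : Function.Surjective f := by
    rintro ⟨y, (hy | hy)⟩
    · obtain ⟨z, hz, hzy⟩ := omega_surj hcont hu hcu y hy
      exact ⟨⟨z, Or.inl hz⟩, Subtype.ext hzy⟩
    · obtain ⟨z, hz, hzy⟩ := omega_surj hcont hv hcv y hy
      exact ⟨⟨z, Or.inr hz⟩, Subtype.ext hzy⟩
  have hus : u ∈ s := Or.inl hu
  have hvs : v ∈ s := Or.inr hv
  have := key f hne' hsurj ⟨u, hus⟩ ⟨v, hvs⟩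
  simp only [hf, Subtype.dist_eq] at this
  exact le_antisymm (hne u v) this
end

section
/- Let (X, d) be a metric space and T : X → X non-expanding. Define the relation u ∼ v ⟺ v ∈ ω(u) on the set of recurrent points of T (points with u ∈ ω(u) and ω(u) compact). Then ∼ is an equivalence relation on the set of such recurrent points. -/
/-- The set of recurrent points (with compact ω-limit set). -/
def recurrentSet {X : Type*} [MetricSpace X] (T : X → X) : Set X :=
  {u | u ∈ omegaSet T u ∧ IsCompact (omegaSet T u)}

lemma iter_nonexp {X : Type*} [MetricSpace X] (T : X → X)
    (hne : ∀ x y : X, dist (T x) (T y) ≤ dist x y) :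
    ∀ (m : ℕ) (x y : X), dist (T^[m] x) (T^[m] y) ≤ dist x y := by
  intro m
  induction m with
  | zero => simp
  | succ n ih =>
    intro x y
    rw [Function.iterate_succ_apply', Function.iterate_succ_apply']
    exact le_trans (hne _ _) (ih x y)

lemma mem_omega_iff {X : Type*} [MetricSpace X] (T : X → X) (u v : X) :
    v ∈ omegaSet T u ↔ ∀ ε > 0, ∀ N : ℕ, ∃ n ≥ N, dist (T^[n] u) v < ε := by
  constructor
  · rintro ⟨k, hk, ht⟩ ε hε N
    rw [Metric.tendsto_atTop] at ht
    obtain ⟨M, hM⟩ := ht ε hε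
    exact ⟨k (max M N), le_trans (le_max_right M N) (hk.le_apply),
      hM (max M N) (le_max_left M N)⟩
  · intro h
    have hfreq : ∀ n : ℕ, ∃ᶠ m in Filter.atTop, dist (T^[m] u) v < 1 / (n + 1) := by
      intro n
      rw [Filter.frequently_atTop]
      intro N
      obtain ⟨m, hm, hd⟩ := h (1 / (n + 1)) (by positivity) N
      exact ⟨m, hm, hd⟩
    obtain ⟨φ, hφ, hP⟩ := Filter.extraction_forall_of_frequently hfreq
    refine ⟨φ, hφ, ?_⟩
    rw [tendsto_iff_dist_tendsto_zero]
    apply squeeze_zero (fun n => dist_nonneg) (fun n => (hP n).le)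
    exact tendsto_one_div_add_atTop_nhds_zero_nat

theorem stmt_4 {X : Type*} [MetricSpace X] (T : X → X)
    (hne : ∀ x y : X, dist (T x) (T y) ≤ dist x y) :
    (∀ u ∈ recurrentSet T, u ∈ omegaSet T u) ∧
    (∀ u ∈ recurrentSet T, ∀ v ∈ recurrentSet T,
      v ∈ omegaSet T u → u ∈ omegaSet T v) ∧
    (∀ u ∈ recurrentSet T, ∀ v ∈ recurrentSet T, ∀ w ∈ recurrentSet T,
      v ∈ omegaSet T u → w ∈ omegaSet T v → w ∈ omegaSet T u) := by
  refine ⟨fun u hu => hu.1, ?_, ?_⟩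
  · -- symmetry
    intro u hu v _ hvu
    rw [mem_omega_iff] at hvu ⊢
    have huu := (mem_omega_iff T u u).mp hu.1
    intro ε hε N
    obtain ⟨b, -, hb⟩ := hvu (ε / 2) (by positivity) 0
    obtain ⟨a, ha, hd⟩ := huu (ε / 2) (by positivity) (N + b)
    refine ⟨a - b, le_tsub_of_add_le_right ha, ?_⟩
    have hab : a - b + b = a := Nat.sub_add_cancel (le_trans (Nat.le_add_left b N) ha)
    calc dist (T^[a - b] v) u
        ≤ dist (T^[a - b] v) (T^[a - b] (T^[b] u)) + dist (T^[a - b] (T^[b] u)) u :=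
          dist_triangle _ _ _
      _ ≤ dist v (T^[b] u) + dist (T^[a - b] (T^[b] u)) u := by
          gcongr; exact iter_nonexp T hne _ _ _
      _ < ε / 2 + ε / 2 := by
          rw [← Function.iterate_add_apply, hab]
          rw [dist_comm] at hb
          exact add_lt_add hb hd
      _ = ε := by ring
  · -- transitivity
    intro u _ v _ w _ hvu hwv
    rw [mem_omega_iff] at hvu hwv ⊢
    intro ε hε N
    obtain ⟨m, -, hm⟩ := hwv (ε / 2) (by positivity) 0
    obtain ⟨k, hk, hkd⟩ := hvu (ε / 2) (by positivity) N
    refine ⟨m + k, le_trans hk (Nat.le_add_left k m), ?_⟩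
    calc dist (T^[m + k] u) w
        ≤ dist (T^[m] (T^[k] u)) (T^[m] v) + dist (T^[m] v) w := by
          rw [Function.iterate_add_apply]; exact dist_triangle _ _ _
      _ ≤ dist (T^[k] u) v + dist (T^[m] v) w := by
          gcongr; exact iter_nonexp T hne _ _ _
      _ < ε / 2 + ε / 2 := add_lt_add hkd hm
      _ = ε := by ring
end

section
/- Let (X, d) be a metric space and T : X → X continuous and non-expanding. Suppose v ∈ X has the property that the backward orbit exists and is relatively compact: there are points v₋ₙ (n ≥ 0) with v₀ = v, T v₋₍ₙ₊₁₎ = v₋ₙ, and {v₋ₙ : n ≥ 0} contained in a compact set. Then v is recurrent: there is a strictly increasing sequence of positive integers (kₙ) with T^{kₙ} v → v. -/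
theorem stmt_18 {X : Type*} [MetricSpace X] (T : X → X) (hcont : Continuous T)
    (hne : ∀ x y : X, dist (T x) (T y) ≤ dist x y)
    (v : X) (w : ℕ → X) (hw0 : w 0 = v)
    (hback : ∀ n : ℕ, T (w (n + 1)) = w n)
    (hcomp : ∃ K : Set X, IsCompact K ∧ ∀ n, w n ∈ K) :
    ∃ k : ℕ → ℕ, StrictMono k ∧ (∀ n, 1 ≤ k n) ∧
      Filter.Tendsto (fun n => T^[k n] v) Filter.atTop (nhds v) := by
  obtain ⟨K, hK, hwK⟩ := hcomp
  -- iterates are nonexpansive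
  have hiter : ∀ (n : ℕ) (x y : X), dist (T^[n] x) (T^[n] y) ≤ dist x y := by
    intro n
    induction n with
    | zero => intro x y; simp
    | succ n ih =>
      intro x y
      rw [Function.iterate_succ_apply', Function.iterate_succ_apply']
      exact le_trans (hne _ _) (ih x y)
  -- backward orbit property iterated
  have hwb : ∀ n k : ℕ, T^[k] (w (n + k)) = w n := by
    intro n k
    induction k with
    | zero => simp
    | succ k ih =>
      rw [show n + (k + 1) = (n + k) + 1 from rfl, Function.iterate_succ_apply,
        hback, ih]
  have hv : ∀ n : ℕ, T^[n] (w n) = v := by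
    intro n
    have := hwb 0 n
    rwa [Nat.zero_add, hw0] at this
  -- key estimate
  have hkey : ∀ m n : ℕ, dist (T^[m] v) v ≤ dist (w n) (w (n + m)) := by
    intro m n
    have h1 : T^[m] v = T^[n] (T^[m] (w n)) := by
      rw [← Function.iterate_add_apply, ← hv n, ← Function.iterate_add_apply,
        Nat.add_comm]
    have h2 : v = T^[n] (T^[m] (w (n + m))) := by
      rw [← Function.iterate_add_apply, hv (n + m)]
    calc dist (T^[m] v) v
        = dist (T^[n] (T^[m] (w n))) (T^[n] (T^[m] (w (n + m)))) := by
          rw [← h1, ← h2]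
      _ ≤ dist (T^[m] (w n)) (T^[m] (w (n + m))) := hiter n _ _
      _ ≤ dist (w n) (w (n + m)) := hiter m _ _
  -- compactness: convergent subsequence
  obtain ⟨p, -, φ, hφ, hconv⟩ := hK.tendsto_subseq hwK
  have hφle : ∀ J c : ℕ, φ J + c ≤ φ (J + c) := by
    intro J c
    induction c with
    | zero => simp
    | succ c ih =>
      have := hφ (show J + c < J + (c + 1) by omega)
      omega
  have hrec : ∀ ε : ℝ, 0 < ε → ∀ N : ℕ, ∃ m : ℕ, N ≤ m ∧ 1 ≤ m ∧
      dist (T^[m] v) v < ε := by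
    intro ε hε N
    obtain ⟨J, hJ⟩ := (Metric.tendsto_atTop.1 hconv) (ε / 2) (by linarith)
    set j := J + N + 1 with hj
    have hle : φ J + N + 1 ≤ φ j := by
      have h1 := hφle J (N + 1)
      have h2 : φ (J + (N + 1)) = φ j := rfl
      omega
    refine ⟨φ j - φ J, by omega, by omega, ?_⟩
    have hsum : φ J + (φ j - φ J) = φ j := by omega
    calc dist (T^[φ j - φ J] v) v ≤ dist (w (φ J)) (w (φ J + (φ j - φ J))) :=
          hkey _ _
      _ = dist (w (φ J)) (w (φ j)) := by rw [hsum]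
      _ ≤ dist (w (φ J)) p + dist (w (φ j)) p := dist_triangle_right _ _ _
      _ < ε / 2 + ε / 2 := by
          have h1 := hJ J le_rfl
          have h2 := hJ j (by omega)
          simp only [Function.comp] at h1 h2
          linarith
      _ = ε := by ring
  have hrec' : ∀ n N : ℕ, ∃ m : ℕ, N ≤ m ∧ 1 ≤ m ∧
      dist (T^[m] v) v < 1 / ((n : ℝ) + 1) := by
    intro n N
    exact hrec (1 / ((n : ℝ) + 1)) (by positivity) N
  choose g hg1 hg2 hg3 using hrec'
  set k : ℕ → ℕ := fun n => Nat.rec (g 0 1) (fun n ih => g (n + 1) (ih + 1)) n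
    with hk
  have hk0 : k 0 = g 0 1 := rfl
  have hks : ∀ n, k (n + 1) = g (n + 1) (k n + 1) := fun n => rfl
  have hmono : StrictMono k := by
    apply strictMono_nat_of_lt_succ
    intro n
    have := hg1 (n + 1) (k n + 1)
    rw [hks n]
    omega
  have hone : ∀ n, 1 ≤ k n := by
    intro n
    cases n with
    | zero => rw [hk0]; exact hg2 0 1
    | succ n =>
      have := hg1 (n + 1) (k n + 1)
      rw [hks n]
      omega
  have hbound : ∀ n, dist (T^[k n] v) v ≤ 1 / ((n : ℝ) + 1) := by
    intro n
    cases n with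
    | zero => rw [hk0]; exact le_of_lt (hg3 0 1)
    | succ n => rw [hks n]; exact le_of_lt (hg3 (n + 1) (k n + 1))
  refine ⟨k, hmono, hone, ?_⟩
  rw [tendsto_iff_dist_tendsto_zero]
  exact squeeze_zero (fun n => dist_nonneg) hbound
    tendsto_one_div_add_atTop_nhds_zero_nat
end

section
/- Let (X, d) be a metric space and T : X → X non-expanding. Suppose (v₋ₙ)_{n≥0} is a backward orbit of v (v₀ = v, T v₋₍ₙ₊₁₎ = v₋ₙ) and there is a strictly increasing sequence of positive integers (kₙ) such that v₋ₖₙ converges to some point v_α ∈ X. Then, setting k'ₙ = k_{n+1} − kₙ, the point v_α satisfies T^{k'ₙ} v_α → v_α, i.e., v_α is recurrent along the sequence (k'ₙ). -/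
open Filter Topology

theorem iterate_sub_apply_of_backward_orbit {X : Type*} {T : X → X} {w : ℕ → X}
    (hback : ∀ n, T (w (n + 1)) = w n) {i j : ℕ} (hij : i ≤ j) :
    T^[j - i] (w j) = w i := by
  obtain ⟨m, rfl⟩ := Nat.exists_eq_add_of_le hij
  rw [Nat.add_sub_cancel_left]
  induction m generalizing i with
  | zero => rfl
  | succ m ih =>
    rw [Function.iterate_succ_apply, ← Nat.add_assoc, hback, ih (Nat.le_add_right _ _)]

/-- `T^[m n] a` stays as close to `x n` as `a` is to `x (n + 1)`. -/
theorem LipschitzWith.tendsto_iterate_of_iterate_succ_eq {X : Type*} [PseudoMetricSpace X]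
    {T : X → X} (hT : LipschitzWith 1 T) {x : ℕ → X} {m : ℕ → ℕ} {a : X}
    (hx : ∀ n, T^[m n] (x (n + 1)) = x n) (ha : Tendsto x atTop (𝓝 a)) :
    Tendsto (fun n => T^[m n] a) atTop (𝓝 a) := by
  have hclose : ∀ n, dist (x n) (T^[m n] a) ≤ dist (x (n + 1)) a := fun n => by
    simpa [hx n] using (hT.iterate (m n)).dist_le_mul (x (n + 1)) a
  have hshift : Tendsto (fun n => dist (x (n + 1)) a) atTop (𝓝 0) :=
    (tendsto_iff_dist_tendsto_zero.mp ha).comp (tendsto_add_atTop_nat 1)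
  exact ha.congr_dist (squeeze_zero (fun _ => dist_nonneg) hclose hshift)

theorem stmt_19_general {X : Type*} [MetricSpace X] (T : X → X)
    (hne : ∀ x y : X, dist (T x) (T y) ≤ dist x y)
    (w : ℕ → X)
    (hback : ∀ n : ℕ, T (w (n + 1)) = w n)
    (k : ℕ → ℕ) (hk : StrictMono k)
    (vα : X) (hconv : Filter.Tendsto (fun n => w (k n)) Filter.atTop (nhds vα)) :
    Filter.Tendsto (fun n => T^[k (n + 1) - k n] vα) Filter.atTop (nhds vα) := by
  have hT : LipschitzWith 1 T := LipschitzWith.of_dist_le_mul fun x y => by simpa using hne x y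
  exact hT.tendsto_iterate_of_iterate_succ_eq
    (fun n => iterate_sub_apply_of_backward_orbit hback (hk.monotone n.le_succ)) hconv

theorem stmt_19 {X : Type*} [MetricSpace X] (T : X → X)
    (hne : ∀ x y : X, dist (T x) (T y) ≤ dist x y)
    (v : X) (w : ℕ → X) (hw0 : w 0 = v)
    (hback : ∀ n : ℕ, T (w (n + 1)) = w n)
    (k : ℕ → ℕ) (hk : StrictMono k) (hk1 : ∀ n, 1 ≤ k n)
    (vα : X) (hconv : Filter.Tendsto (fun n => w (k n)) Filter.atTop (nhds vα)) :
    Filter.Tendsto (fun n => T^[k (n + 1) - k n] vα) Filter.atTop (nhds vα) :=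
  stmt_19_general T hne w hback k hk vα hconv
end
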